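/- For every multi-index A∈ℕ³ with |A|≥1 there is a constant C>0 such that for all p,q∈ℝ³, |∂^A_p [1/(n⁰+√(s(p,q)))]| ≤ C (q⁰)^{|A|} / (n⁰+√(s(p,q))), where n⁰=p⁰+q⁰ and the derivatives are taken in the variable p. -/

import Mathlib

/-!
Write `w = 1/(p⁰ + q⁰ + √s)`. From `s = 2 + 2(p⁰q⁰ - p·q)` one gets
`∂ᵢ√s = (q⁰ pᵢ/p⁰ - qᵢ)/√s`, and the family `pᵢ/p⁰`, `1/p⁰`, `1/√s`, `∂ᵢ√s`, `w` is closed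
under `∂_p`: the derivative of each member is a polynomial in the members in which the
coefficient `q⁰` enters at most once. Since `s ≥ 4`, the first three members are bounded by `1`,
`∂ᵢ√s` by `2q⁰` and `w` by itself, so by induction every derivative of order `k` of each member
is `O((q⁰)ᵏ)` times its own bound.
-/

open Matrix

noncomputable section

/-- First-order partial derivative in the momentum variable `p_i`. -/
def pd (i : Fin 3) (f : (Fin 3 → ℝ) → ℝ) : (Fin 3 → ℝ) → ℝ :=
  fun p => fderiv ℝ f p (Pi.single i 1)

/-- Mixed partial derivative `∂^A` for a multi-index `A ∈ ℕ³`. -/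
def multiDeriv (A : Fin 3 → ℕ) (f : (Fin 3 → ℝ) → ℝ) : (Fin 3 → ℝ) → ℝ :=
  (pd 0)^[A 0] ((pd 1)^[A 1] ((pd 2)^[A 2] f))

/-- Total energy `s(p,q) = (p⁰+q⁰)² − |p+q|²` with `p⁰ = √(1+|p|²)` (orthonormal frame). -/
def sTot (p q : Fin 3 → ℝ) : ℝ :=
  (Real.sqrt (1 + p ⬝ᵥ p) + Real.sqrt (1 + q ⬝ᵥ q))^2 - (p + q) ⬝ᵥ (p + q)

section PartialDerivative

variable {f g : (Fin 3 → ℝ) → ℝ} {p : Fin 3 → ℝ} {i : Fin 3}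

lemma pd_add (hf : DifferentiableAt ℝ f p) (hg : DifferentiableAt ℝ g p) :
    pd i (fun x => f x + g x) p = pd i f p + pd i g p := by
  simp [pd, fderiv_fun_add hf hg]

lemma pd_neg : pd i (fun x => -f x) p = -pd i f p := by
  simp [pd]

lemma pd_sub (hf : DifferentiableAt ℝ f p) (hg : DifferentiableAt ℝ g p) :
    pd i (fun x => f x - g x) p = pd i f p - pd i g p := by
  simp [pd, fderiv_fun_sub hf hg]

lemma pd_const (c : ℝ) : pd i (fun _ => c) p = 0 := by
  simp [pd]

lemma pd_mul (hf : DifferentiableAt ℝ f p) (hg : DifferentiableAt ℝ g p) :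
    pd i (fun x => f x * g x) p = f p * pd i g p + g p * pd i f p := by
  simp [pd, fderiv_fun_mul hf hg]

lemma pd_sum {ι : Type*} (s : Finset ι) {F : ι → (Fin 3 → ℝ) → ℝ}
    (hF : ∀ j ∈ s, DifferentiableAt ℝ (F j) p) :
    pd i (fun x => ∑ j ∈ s, F j x) p = ∑ j ∈ s, pd i (F j) p := by
  simp [pd, fderiv_fun_sum hF]

lemma pd_inv (hf : DifferentiableAt ℝ f p) (h0 : f p ≠ 0) :
    pd i (fun x => (f x)⁻¹) p = -(pd i f p * ((f p)⁻¹ * (f p)⁻¹)) := by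
  have h : HasFDerivAt (fun x => (f x)⁻¹) _ p :=
    (hasDerivAt_inv h0).comp_hasFDerivAt p hf.hasFDerivAt
  rw [pd, h.fderiv]
  change -(f p ^ 2)⁻¹ * pd i f p = _
  ring

lemma pd_sqrt (hf : DifferentiableAt ℝ f p) (h0 : f p ≠ 0) :
    pd i (fun x => √(f x)) p = pd i f p / (2 * √(f p)) := by
  rw [pd, (hf.hasFDerivAt.sqrt h0).fderiv]
  simp [pd, div_eq_inv_mul]

lemma pd_apply (j : Fin 3) : pd i (fun x => x j) p = if j = i then 1 else 0 := by
  rw [pd, (hasFDerivAt_apply j p).fderiv]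
  simp [Pi.single_apply]

end PartialDerivative

lemma dotProduct_self_nonneg {n : Type*} [Fintype n] (v : n → ℝ) : 0 ≤ v ⬝ᵥ v :=
  Finset.sum_nonneg fun i _ => mul_self_nonneg (v i)

lemma one_add_dotProduct_sq_le {n : Type*} [Fintype n] (u v : n → ℝ) :
    (1 + u ⬝ᵥ v) ^ 2 ≤ (1 + u ⬝ᵥ u) * (1 + v ⬝ᵥ v) := by
  have cauchy_schwarz : (u ⬝ᵥ v) ^ 2 ≤ (u ⬝ᵥ u) * (v ⬝ᵥ v) := by
    simpa only [dotProduct, sq] using Finset.sum_mul_sq_le_sq_mul_sq Finset.univ u v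
  have am_gm : 0 ≤ (u - v) ⬝ᵥ (u - v) := by
    simpa only [dotProduct] using Finset.sum_nonneg fun i _ => mul_self_nonneg ((u - v) i)
  simp only [sub_dotProduct, dotProduct_sub, dotProduct_comm v u] at am_gm
  nlinarith

@[fun_prop]
lemma DifferentiableAt.dotProduct {E n : Type*} [NormedAddCommGroup E] [NormedSpace ℝ E]
    [Fintype n] {f g : E → n → ℝ} {x : E} (hf : DifferentiableAt ℝ f x)
    (hg : DifferentiableAt ℝ g x) : DifferentiableAt ℝ (fun y => f y ⬝ᵥ g y) x := by
  unfold _root_.dotProduct; fun_prop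

@[fun_prop]
lemma Differentiable.dotProduct {E n : Type*} [NormedAddCommGroup E] [NormedSpace ℝ E]
    [Fintype n] {f g : E → n → ℝ} (hf : Differentiable ℝ f) (hg : Differentiable ℝ g) :
    Differentiable ℝ (fun y => f y ⬝ᵥ g y) := fun x => (hf x).dotProduct (hg x)

lemma pd_dotProduct_self (p : Fin 3 → ℝ) (i : Fin 3) :
    pd i (fun x => x ⬝ᵥ x) p = 2 * p i := by
  unfold dotProduct
  rw [pd_sum _ (fun j _ => by fun_prop)]
  simp only [pd_mul (differentiableAt_apply _ _) (differentiableAt_apply _ _), pd_apply]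
  simp only [mul_ite, mul_one, mul_zero, Finset.sum_add_distrib, Finset.sum_ite_eq',
    Finset.mem_univ, ↓reduceIte]
  ring

lemma pd_dotProduct_const (p q : Fin 3 → ℝ) (i : Fin 3) :
    pd i (fun x => x ⬝ᵥ q) p = q i := by
  unfold dotProduct
  rw [pd_sum _ (fun j _ => by fun_prop)]
  simp only [pd_mul (differentiableAt_apply _ _) (differentiableAt_const _), pd_apply, pd_const]
  simp

/-- `DerivBounds ρ m f B`: every partial derivative of order `k ≤ m` of `f q` is bounded by
`c * ρ q ^ k * B q`, with `c` independent of the parameter `q`. -/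
def DerivBounds {ι : Type*} (ρ : ι → ℝ) :
    ℕ → (ι → (Fin 3 → ℝ) → ℝ) → (ι → (Fin 3 → ℝ) → ℝ) → Prop
  | 0, f, B => ∀ q p, |f q p| ≤ B q p
  | m + 1, f, B => (∀ q p, |f q p| ≤ B q p) ∧ (∀ q, Differentiable ℝ (f q)) ∧
      ∀ i, ∃ c > 0, DerivBounds ρ m (fun q => pd i (f q)) (fun q p => c * ρ q * B q p)

namespace DerivBounds

variable {ι : Type*} {ρ : ι → ℝ} {m : ℕ} {f g B C : ι → (Fin 3 → ℝ) → ℝ}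

lemma abs_le : ∀ {m f B}, DerivBounds ρ m f B → ∀ q p, |f q p| ≤ B q p
  | 0, _, _, h => h
  | _ + 1, _, _, h => h.1

lemma bound_nonneg (h : DerivBounds ρ m f B) (q p) : 0 ≤ B q p :=
  (abs_nonneg _).trans (h.abs_le q p)

lemma of_succ : ∀ {m f B}, DerivBounds ρ (m + 1) f B → DerivBounds ρ m f B
  | 0, _, _, h => h.1
  | _ + 1, _, _, h => ⟨h.1, h.2.1, fun i => (h.2.2 i).imp fun _ hc => ⟨hc.1, of_succ hc.2⟩⟩

lemma congr (h : DerivBounds ρ m f B) (e : ∀ q p, f q p = g q p) : DerivBounds ρ m g B := by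
  rwa [show f = g from funext₂ e] at h

lemma mono (hρ : ∀ q, 0 ≤ ρ q) :
    ∀ {m f B C}, DerivBounds ρ m f B → (∀ q p, B q p ≤ C q p) → DerivBounds ρ m f C
  | 0, _, _, _, h, hBC => fun q p => (h q p).trans (hBC q p)
  | _ + 1, _, _, _, h, hBC => by
    refine ⟨fun q p => (h.1 q p).trans (hBC q p), h.2.1, fun i => ?_⟩
    obtain ⟨c, hc, hi⟩ := h.2.2 i
    exact ⟨c, hc, mono hρ hi fun q p =>
      mul_le_mul_of_nonneg_left (hBC q p) (mul_nonneg hc.le (hρ q))⟩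

lemma add (hρ : ∀ q, 0 ≤ ρ q) : ∀ {m f g B C}, DerivBounds ρ m f B → DerivBounds ρ m g C →
    DerivBounds ρ m (fun q p => f q p + g q p) (fun q p => B q p + C q p)
  | 0, _, _, _, _, hf, hg => fun q p => (abs_add_le _ _).trans (add_le_add (hf q p) (hg q p))
  | _ + 1, f, g, B, C, hf, hg => by
    refine ⟨fun q p => (abs_add_le _ _).trans (add_le_add (hf.1 q p) (hg.1 q p)),
      fun q => (hf.2.1 q).add (hg.2.1 q), fun i => ?_⟩
    obtain ⟨c, hc, hfi⟩ := hf.2.2 i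
    obtain ⟨d, hd, hgi⟩ := hg.2.2 i
    refine ⟨c + d, by positivity, ?_⟩
    refine ((add hρ hfi hgi).congr fun q p => (pd_add (hf.2.1 q p) (hg.2.1 q p)).symm).mono
      hρ fun q p => ?_
    have hB := hf.of_succ.bound_nonneg q p
    have hC := hg.of_succ.bound_nonneg q p
    have := hρ q
    nlinarith [mul_nonneg (mul_nonneg hc.le this) hC, mul_nonneg (mul_nonneg hd.le this) hB]

lemma neg : ∀ {m f B}, DerivBounds ρ m f B → DerivBounds ρ m (fun q p => -f q p) B
  | 0, _, _, h => fun q p => (abs_neg _).trans_le (h q p)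
  | _ + 1, _, _, h => by
    refine ⟨fun q p => (abs_neg _).trans_le (h.1 q p), fun q => (h.2.1 q).neg, fun i => ?_⟩
    obtain ⟨c, hc, hi⟩ := h.2.2 i
    exact ⟨c, hc, hi.neg.congr fun _ _ => pd_neg.symm⟩

lemma sub (hρ : ∀ q, 0 ≤ ρ q) (hf : DerivBounds ρ m f B) (hg : DerivBounds ρ m g C) :
    DerivBounds ρ m (fun q p => f q p - g q p) (fun q p => B q p + C q p) :=
  (hf.add hρ hg.neg).congr fun _ _ => (sub_eq_add_neg _ _).symm

lemma mul (hρ : ∀ q, 0 ≤ ρ q) : ∀ {m f g B C}, DerivBounds ρ m f B → DerivBounds ρ m g C →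
    DerivBounds ρ m (fun q p => f q p * g q p) (fun q p => B q p * C q p)
  | 0, _, _, _, _, hf, hg => fun q p => (abs_mul _ _).trans_le <|
      mul_le_mul (hf q p) (hg q p) (abs_nonneg _) ((abs_nonneg _).trans (hf q p))
  | _ + 1, f, g, B, C, hf, hg => by
    refine ⟨(mul hρ hf.of_succ hg.of_succ).abs_le, fun q => (hf.2.1 q).mul (hg.2.1 q),
      fun i => ?_⟩
    obtain ⟨c, hc, hfi⟩ := hf.2.2 i
    obtain ⟨d, hd, hgi⟩ := hg.2.2 i
    refine ⟨c + d, by positivity, ?_⟩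
    refine (((mul hρ hf.of_succ hgi).add hρ (mul hρ hg.of_succ hfi)).congr fun q p =>
      (pd_mul (hf.2.1 q p) (hg.2.1 q p)).symm).mono hρ fun _ _ => le_of_eq (by ring)

lemma const (hρ : ∀ q, 0 ≤ ρ q) :
    ∀ (m : ℕ) (c : ι → ℝ), DerivBounds ρ m (fun q _ => c q) (fun q _ => |c q|)
  | 0, _ => fun _ _ => le_rfl
  | m + 1, c => ⟨fun _ _ => le_rfl, fun _ => differentiable_const _, fun _ =>
      ⟨1, one_pos, ((const hρ m 0).congr fun _ _ => (pd_const _).symm).mono hρ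
        fun q _ => by simpa using mul_nonneg (hρ q) (abs_nonneg (c q))⟩⟩

lemma iterate_pd (hρ : ∀ q, 0 ≤ ρ q) (i : Fin 3) : ∀ (k : ℕ) {m f B},
    DerivBounds ρ (m + k) f B →
      ∃ c > 0, DerivBounds ρ m (fun q => (pd i)^[k] (f q)) (fun q p => c * ρ q ^ k * B q p)
  | 0, _, _, _, h => ⟨1, one_pos, h.mono hρ fun _ _ => by simp⟩
  | k + 1, m, f, B, h => by
    obtain ⟨c, hc, hi⟩ := h.2.2 i
    obtain ⟨d, hd, hk⟩ := iterate_pd hρ i k hi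
    exact ⟨d * c, by positivity, hk.mono hρ fun q p => le_of_eq (by ring)⟩

lemma multiDeriv_le (hρ : ∀ q, 0 ≤ ρ q) {A : Fin 3 → ℕ}
    (h : DerivBounds ρ (∑ i, A i) f B) :
    ∃ c > 0, ∀ q p, |multiDeriv A (f q) p| ≤ c * ρ q ^ (∑ i, A i) * B q p := by
  rw [Fin.sum_univ_three] at h ⊢
  obtain ⟨c₂, hc₂, h₂⟩ := h.iterate_pd hρ 2 (A 2)
  obtain ⟨c₁, hc₁, h₁⟩ := h₂.iterate_pd hρ 1 (A 1)
  rw [← zero_add (A 0)] at h₁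
  obtain ⟨c₀, hc₀, h₀⟩ := h₁.iterate_pd hρ 0 (A 0)
  refine ⟨c₀ * c₁ * c₂, by positivity, fun q p => (h₀.abs_le q p).trans_eq ?_⟩
  ring

end DerivBounds

lemma abs_ite_le_one (P : Prop) [Decidable P] : |(if P then 1 else 0 : ℝ)| ≤ 1 := by
  split_ifs <;> simp

namespace Kinematics

def energy (p : Fin 3 → ℝ) : ℝ := √(1 + p ⬝ᵥ p)

def velocity (i : Fin 3) (p : Fin 3 → ℝ) : ℝ := p i * (energy p)⁻¹

def rootS (q p : Fin 3 → ℝ) : ℝ := √(sTot p q)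

def gradRootS (q : Fin 3 → ℝ) (i : Fin 3) (p : Fin 3 → ℝ) : ℝ :=
  (energy q * velocity i p - q i) * (rootS q p)⁻¹

def invEnergySum (q p : Fin 3 → ℝ) : ℝ := (energy p + energy q + rootS q p)⁻¹

lemma energy_sq (p : Fin 3 → ℝ) : energy p ^ 2 = 1 + p ⬝ᵥ p :=
  Real.sq_sqrt (by linarith [dotProduct_self_nonneg p])

lemma one_le_energy (p : Fin 3 → ℝ) : 1 ≤ energy p :=
  Real.one_le_sqrt.mpr (by linarith [dotProduct_self_nonneg p])

lemma energy_pos (p : Fin 3 → ℝ) : 0 < energy p := one_pos.trans_le (one_le_energy p)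

lemma abs_apply_le_energy (p : Fin 3 → ℝ) (i : Fin 3) : |p i| ≤ energy p := by
  refine Real.abs_le_sqrt ?_
  have := Finset.single_le_sum (fun j _ => mul_self_nonneg (p j)) (Finset.mem_univ i)
  rw [sq]
  simp only [dotProduct] at this ⊢
  linarith

lemma abs_velocity_le_one (i : Fin 3) (p : Fin 3 → ℝ) : |velocity i p| ≤ 1 := by
  rw [velocity, abs_mul, abs_inv, abs_of_pos (energy_pos p)]
  exact mul_inv_le_one_of_le₀ (abs_apply_le_energy p i) (energy_pos p).le

lemma inv_energy_le_one (p : Fin 3 → ℝ) : (energy p)⁻¹ ≤ 1 :=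
  inv_le_one_of_one_le₀ (one_le_energy p)

lemma sTot_eq (p q : Fin 3 → ℝ) : sTot p q = 2 + 2 * (energy p * energy q - p ⬝ᵥ q) := by
  have h := congrArg₂ (· + ·) (energy_sq p) (energy_sq q)
  simp only [sTot, add_dotProduct, dotProduct_add, dotProduct_comm q p] at h ⊢
  rw [← energy, ← energy]
  linear_combination h

lemma four_le_sTot (p q : Fin 3 → ℝ) : 4 ≤ sTot p q := by
  have h : 1 + p ⬝ᵥ q ≤ energy p * energy q := by
    rw [energy, energy, ← Real.sqrt_mul (by linarith [dotProduct_self_nonneg p])]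
    exact Real.le_sqrt_of_sq_le (one_add_dotProduct_sq_le p q)
  rw [sTot_eq]
  linarith

lemma two_le_rootS (q p : Fin 3 → ℝ) : 2 ≤ rootS q p :=
  Real.le_sqrt_of_sq_le (by linarith [four_le_sTot p q])

lemma rootS_pos (q p : Fin 3 → ℝ) : 0 < rootS q p := two_pos.trans_le (two_le_rootS q p)

lemma inv_rootS_le_one (q p : Fin 3 → ℝ) : (rootS q p)⁻¹ ≤ 1 :=
  inv_le_one_of_one_le₀ (one_le_two.trans (two_le_rootS q p))

lemma abs_gradRootS_le (q : Fin 3 → ℝ) (i : Fin 3) (p : Fin 3 → ℝ) :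
    |gradRootS q i p| ≤ 2 * energy q := by
  have hv := abs_velocity_le_one i p
  have hq := abs_apply_le_energy q i
  have hr := inv_rootS_le_one q p
  have hr₀ := inv_pos.mpr (rootS_pos q p)
  have hq₁ := one_le_energy q
  rw [gradRootS, abs_mul, abs_of_pos hr₀]
  calc |energy q * velocity i p - q i| * (rootS q p)⁻¹
      ≤ (energy q * |velocity i p| + |q i|) * 1 := by
        gcongr
        · exact (abs_sub _ _).trans (by rw [abs_mul, abs_of_pos (energy_pos q)])
      _ ≤ 2 * energy q := by nlinarith

@[fun_prop]
lemma differentiable_energy : Differentiable ℝ energy := fun p =>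
  (differentiableAt_id.dotProduct differentiableAt_id |>.const_add 1).sqrt
    (by linarith [dotProduct_self_nonneg p])

@[fun_prop]
lemma differentiable_inv_energy : Differentiable ℝ fun x => (energy x)⁻¹ := fun p =>
  (differentiable_energy p).inv (energy_pos p).ne'

@[fun_prop]
lemma differentiable_velocity (i : Fin 3) : Differentiable ℝ (velocity i) := by
  unfold velocity; fun_prop

lemma sTot_left_eq (q : Fin 3 → ℝ) :
    (fun x => sTot x q) = fun x => 2 + 2 * (energy x * energy q - x ⬝ᵥ q) :=
  funext fun x => sTot_eq x q

@[fun_prop]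
lemma differentiable_sTot_left (q : Fin 3 → ℝ) : Differentiable ℝ fun x => sTot x q := by
  rw [sTot_left_eq]; fun_prop

@[fun_prop]
lemma differentiable_rootS (q : Fin 3 → ℝ) : Differentiable ℝ (rootS q) := fun p =>
  (differentiable_sTot_left q p).sqrt (by linarith [four_le_sTot p q])

@[fun_prop]
lemma differentiable_inv_rootS (q : Fin 3 → ℝ) : Differentiable ℝ fun x => (rootS q x)⁻¹ :=
  fun p => (differentiable_rootS q p).inv (rootS_pos q p).ne'

@[fun_prop]
lemma differentiable_gradRootS (q : Fin 3 → ℝ) (i : Fin 3) :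
    Differentiable ℝ (gradRootS q i) := by
  unfold gradRootS; fun_prop

lemma differentiable_invEnergySum (q : Fin 3 → ℝ) : Differentiable ℝ (invEnergySum q) :=
  fun p => (by fun_prop : DifferentiableAt ℝ (fun x => energy x + energy q + rootS q x) p).inv
    (by linarith [energy_pos p, energy_pos q, rootS_pos q p])

section PartialDerivatives

variable (q p : Fin 3 → ℝ) (i j : Fin 3)

lemma pd_energy : pd i energy p = velocity i p := by
  have h : (1 + p ⬝ᵥ p) ≠ 0 := by linarith [dotProduct_self_nonneg p]
  show pd i (fun x => √(1 + x ⬝ᵥ x)) p = _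
  rw [pd_sqrt (by fun_prop) h, pd_add (by fun_prop) (by fun_prop), pd_const, pd_dotProduct_self,
    velocity, energy]
  field_simp
  ring

lemma pd_inv_energy :
    pd i (fun x => (energy x)⁻¹) p = -(velocity i p * ((energy p)⁻¹ * (energy p)⁻¹)) := by
  rw [pd_inv (differentiable_energy p) (energy_pos p).ne', pd_energy]

lemma pd_velocity : pd j (velocity i) p =
    (if i = j then 1 else 0) * (energy p)⁻¹ - velocity i p * velocity j p * (energy p)⁻¹ := by
  show pd j (fun x => x i * (energy x)⁻¹) p = _
  rw [pd_mul (differentiableAt_apply i p) (differentiable_inv_energy p), pd_apply, pd_inv_energy]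
  simp only [velocity]
  ring

lemma pd_sTot_left : pd i (fun x => sTot x q) p = 2 * (energy q * velocity i p - q i) := by
  rw [sTot_left_eq, pd_add (by fun_prop) (by fun_prop), pd_const,
    pd_mul (by fun_prop) (by fun_prop), pd_const, pd_sub (by fun_prop) (by fun_prop),
    pd_mul (by fun_prop) (by fun_prop), pd_const, pd_energy, pd_dotProduct_const]
  ring

lemma pd_rootS : pd i (rootS q) p = gradRootS q i p := by
  show pd i (fun x => √(sTot x q)) p = _
  rw [pd_sqrt (by fun_prop) (by linarith [four_le_sTot p q]), pd_sTot_left, gradRootS, rootS]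
  ring

lemma pd_inv_rootS : pd i (fun x => (rootS q x)⁻¹) p =
    -(gradRootS q i p * ((rootS q p)⁻¹ * (rootS q p)⁻¹)) := by
  rw [pd_inv (differentiable_rootS q p) (rootS_pos q p).ne', pd_rootS]

lemma pd_gradRootS : pd j (gradRootS q i) p =
    energy q * ((if i = j then 1 else 0) * (energy p)⁻¹
        - velocity i p * velocity j p * (energy p)⁻¹) * (rootS q p)⁻¹
      - gradRootS q i p * (gradRootS q j p * (rootS q p)⁻¹) := by
  show pd j (fun x => (energy q * velocity i x - q i) * (rootS q x)⁻¹) p = _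
  rw [pd_mul (by fun_prop) (differentiable_inv_rootS q p), pd_inv_rootS,
    pd_sub (by fun_prop) (by fun_prop), pd_mul (by fun_prop) (by fun_prop), pd_const, pd_const,
    pd_velocity]
  simp only [gradRootS]
  ring

lemma pd_invEnergySum : pd i (invEnergySum q) p =
    -((velocity i p + gradRootS q i p) * (invEnergySum q p * invEnergySum q p)) := by
  show pd i (fun x => (energy x + energy q + rootS q x)⁻¹) p = _
  rw [pd_inv (by fun_prop) (by linarith [energy_pos p, energy_pos q, rootS_pos q p]),
    pd_add (by fun_prop) (by fun_prop), pd_add (by fun_prop) (by fun_prop), pd_const, pd_energy,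
    pd_rootS, add_zero]
  rfl

end PartialDerivatives

lemma energy_nonneg (q : Fin 3 → ℝ) : 0 ≤ energy q := (energy_pos q).le

structure GeneratorBounds (m : ℕ) : Prop where
  velocity : ∀ i, DerivBounds energy m (fun _ => velocity i) (fun _ _ => 1)
  inv_energy : DerivBounds energy m (fun _ p => (energy p)⁻¹) (fun _ _ => 1)
  inv_rootS : DerivBounds energy m (fun q p => (rootS q p)⁻¹) (fun _ _ => 1)
  gradRootS : ∀ i, DerivBounds energy m (fun q => gradRootS q i) (fun q _ => 2 * energy q)

namespace GeneratorBounds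

variable {m : ℕ}

lemma zero : GeneratorBounds 0 where
  velocity i _ p := abs_velocity_le_one i p
  inv_energy _ p := by rw [abs_of_pos (inv_pos.mpr (energy_pos p))]; exact inv_energy_le_one p
  inv_rootS q p := by rw [abs_of_pos (inv_pos.mpr (rootS_pos q p))]; exact inv_rootS_le_one q p
  gradRootS i q p := abs_gradRootS_le q i p

lemma velocity_succ (h : GeneratorBounds m) (i : Fin 3) :
    DerivBounds energy (m + 1) (fun _ => Kinematics.velocity i) (fun _ _ => 1) := by
  refine ⟨fun _ p => abs_velocity_le_one i p, fun _ => differentiable_velocity i,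
    fun j => ⟨2, two_pos, ?_⟩⟩
  have hδ := (DerivBounds.const energy_nonneg m fun _ => if i = j then 1 else 0).mul
    energy_nonneg h.inv_energy
  have hvel := ((h.velocity i).mul energy_nonneg (h.velocity j)).mul energy_nonneg h.inv_energy
  have hpd := (hδ.sub energy_nonneg hvel).congr fun _ p => (pd_velocity p i j).symm
  refine hpd.mono energy_nonneg fun q _ => ?_
  have := abs_ite_le_one (i = j)
  linarith [one_le_energy q]

lemma inv_energy_succ (h : GeneratorBounds m) :
    DerivBounds energy (m + 1) (fun _ p => (energy p)⁻¹) (fun _ _ => 1) := by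
  refine ⟨zero.inv_energy, fun _ => differentiable_inv_energy, fun j => ⟨1, one_pos, ?_⟩⟩
  have hpd := ((h.velocity j).mul energy_nonneg
    (h.inv_energy.mul energy_nonneg h.inv_energy)).neg.congr fun _ p => (pd_inv_energy p j).symm
  refine hpd.mono energy_nonneg fun q _ => ?_
  linarith [one_le_energy q]

lemma inv_rootS_succ (h : GeneratorBounds m) :
    DerivBounds energy (m + 1) (fun q p => (rootS q p)⁻¹) (fun _ _ => 1) := by
  refine ⟨zero.inv_rootS, differentiable_inv_rootS, fun j => ⟨2, two_pos, ?_⟩⟩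
  have hpd := ((h.gradRootS j).mul energy_nonneg
    (h.inv_rootS.mul energy_nonneg h.inv_rootS)).neg.congr fun q p => (pd_inv_rootS q p j).symm
  exact hpd.mono energy_nonneg fun _ _ => le_of_eq (by ring)

lemma gradRootS_succ (h : GeneratorBounds m) (i : Fin 3) :
    DerivBounds energy (m + 1) (fun q => Kinematics.gradRootS q i)
      (fun q _ => 2 * energy q) := by
  refine ⟨zero.gradRootS i, fun q => differentiable_gradRootS q i, fun j => ⟨3, three_pos, ?_⟩⟩
  have hδ := (DerivBounds.const energy_nonneg m fun _ => if i = j then 1 else 0).mul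
    energy_nonneg h.inv_energy
  have hvel := ((h.velocity i).mul energy_nonneg (h.velocity j)).mul energy_nonneg h.inv_energy
  have hV := (h.gradRootS i).mul energy_nonneg ((h.gradRootS j).mul energy_nonneg h.inv_rootS)
  have hpd := ((((DerivBounds.const energy_nonneg m energy).mul energy_nonneg
    (hδ.sub energy_nonneg hvel)).mul energy_nonneg h.inv_rootS).sub energy_nonneg hV).congr
      fun q p => (pd_gradRootS q p i j).symm
  refine hpd.mono energy_nonneg fun q _ => ?_
  have := abs_ite_le_one (i = j)
  have := one_le_energy q
  rw [abs_of_pos (energy_pos q)]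
  nlinarith

end GeneratorBounds

lemma generatorBounds : ∀ m, GeneratorBounds m
  | 0 => .zero
  | m + 1 =>
    have h := generatorBounds m
    ⟨h.velocity_succ, h.inv_energy_succ, h.inv_rootS_succ, h.gradRootS_succ⟩

lemma invEnergySum_pos (q p : Fin 3 → ℝ) : 0 < invEnergySum q p :=
  inv_pos.mpr (by linarith [energy_pos p, energy_pos q, rootS_pos q p])

lemma invEnergySum_le_one (q p : Fin 3 → ℝ) : invEnergySum q p ≤ 1 :=
  inv_le_one_of_one_le₀ (by linarith [energy_pos p, one_le_energy q, rootS_pos q p])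

lemma derivBounds_invEnergySum : ∀ m, DerivBounds energy m invEnergySum invEnergySum
  | 0 => fun q p => (abs_of_pos (invEnergySum_pos q p)).le
  | m + 1 => by
    have h := generatorBounds m
    have hw := derivBounds_invEnergySum m
    refine ⟨hw.abs_le, differentiable_invEnergySum, fun i => ⟨3, three_pos, ?_⟩⟩
    have hpd := (((h.velocity i).add energy_nonneg (h.gradRootS i)).mul energy_nonneg
      (hw.mul energy_nonneg hw)).neg.congr fun q p => (pd_invEnergySum q p i).symm
    refine hpd.mono energy_nonneg fun q p => ?_
    have := one_le_energy q
    have := invEnergySum_pos q p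
    have := invEnergySum_le_one q p
    calc (1 + 2 * energy q) * (invEnergySum q p * invEnergySum q p)
        ≤ 3 * energy q * (invEnergySum q p * 1) := by gcongr; linarith
      _ = _ := by ring

end Kinematics

open Kinematics in
theorem multiDeriv_inv_energySum_general (A : Fin 3 → ℕ) :
    ∃ C > 0, ∀ p q : Fin 3 → ℝ,
      |multiDeriv A
          (fun x => (Real.sqrt (1 + x ⬝ᵥ x) + Real.sqrt (1 + q ⬝ᵥ q)
              + Real.sqrt (sTot x q))⁻¹) p|
        ≤ C * Real.sqrt (1 + q ⬝ᵥ q) ^ (∑ i, A i)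
            / (Real.sqrt (1 + p ⬝ᵥ p) + Real.sqrt (1 + q ⬝ᵥ q) + Real.sqrt (sTot p q)) := by
  obtain ⟨C, hC, h⟩ := (derivBounds_invEnergySum (∑ i, A i)).multiDeriv_le energy_nonneg
  exact ⟨C, hC, fun p q => (h q p).trans_eq (div_eq_mul_inv _ _).symm⟩

/-- **Derivatives of `1/(n⁰+√s)`**: for every multi-index `A` with `|A| ≥ 1` there is
`C > 0` with `|∂^A_p [1/(n⁰+√s)]| ≤ C (q⁰)^{|A|} / (n⁰+√s)`, where `n⁰ = p⁰+q⁰`. -/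
theorem multiDeriv_inv_energySum (A : Fin 3 → ℕ) (hA : 1 ≤ ∑ i, A i) :
    ∃ C > 0, ∀ p q : Fin 3 → ℝ,
      |multiDeriv A
          (fun x => (Real.sqrt (1 + x ⬝ᵥ x) + Real.sqrt (1 + q ⬝ᵥ q)
              + Real.sqrt (sTot x q))⁻¹) p|
        ≤ C * Real.sqrt (1 + q ⬝ᵥ q) ^ (∑ i, A i)
            / (Real.sqrt (1 + p ⬝ᵥ p) + Real.sqrt (1 + q ⬝ᵥ q) + Real.sqrt (sTot p q)) :=
  multiDeriv_inv_energySum_general A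

end
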